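/- arXiv:1906.12069 — 4 statements merged into one kernel-verified Lean document; each statement's English description precedes it below -/
import Mathlib

section
/- (Pointwise normal form of complex type; the converse part of Example 2.6 of the paper.) Let J be an almost generalized complex structure on V with J(V*) = V*. Then there exist a linear complex structure I : V → V (i.e. I² = −Id) and a skew linear map B : V → V* such that J = e^B ∘ J_I ∘ e^{−B}, where J_I : W → W is defined by J_I(x,ξ) := (−Ix, I*ξ). -/
noncomputable section

open Module

variable {V : Type*} [AddCommGroup V] [Module ℝ V] [FiniteDimensional ℝ V]

/-- The natural pairing on `W = V × V*`. -/
def natPairing (w w' : V × Dual ℝ V) : ℝ :=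
  (1 / 2 : ℝ) * (w.2 w'.1 + w'.2 w.1)

/-- `J` is orthogonal for the natural pairing. -/
def IsOrth (J : (V × Dual ℝ V) →ₗ[ℝ] (V × Dual ℝ V)) : Prop :=
  ∀ w w', natPairing (J w) (J w') = natPairing w w'

/-- The subspace `V* = {0} × V*` of `W = V × V*`. -/
def dualSub (V : Type*) [AddCommGroup V] [Module ℝ V] :
    Submodule ℝ (V × Dual ℝ V) :=
  (⊥ : Submodule ℝ V).prod (⊤ : Submodule ℝ (Dual ℝ V))

/-- The B-field transform `e^B (x, ξ) = (x, ξ + Bx)` associated to `B : V → V*`. -/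
def eB (B : V →ₗ[ℝ] Dual ℝ V) : (V × Dual ℝ V) →ₗ[ℝ] (V × Dual ℝ V) :=
  LinearMap.prod (LinearMap.fst ℝ V (Dual ℝ V))
    (LinearMap.snd ℝ V (Dual ℝ V) + B.comp (LinearMap.fst ℝ V (Dual ℝ V)))

/-- The generalized complex structure `J_I (x, ξ) = (−Ix, I*ξ)` of a complex structure `I`. -/
def JI (I : V →ₗ[ℝ] V) : (V × Dual ℝ V) →ₗ[ℝ] (V × Dual ℝ V) :=
  LinearMap.prodMap (-I) I.dualMap

/-- Pointwise normal form of complex type: an almost generalized complex structure `J` with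
`J(V*) = V*` is of the form `J = e^B ∘ J_I ∘ e^{−B}` for a linear complex structure `I` and a
skew map `B : V → V*`. -/
theorem complex_type_normal_form (J : (V × Dual ℝ V) →ₗ[ℝ] (V × Dual ℝ V))
    (horth : IsOrth J) (hsq : ∀ w, J (J w) = -w)
    (hdual : (dualSub V).map J = dualSub V) :
    ∃ (I : V →ₗ[ℝ] V) (B : V →ₗ[ℝ] Dual ℝ V),
      (∀ x, I (I x) = -x) ∧ (∀ x y, B x y = -(B y x)) ∧
      J = (eB B).comp ((JI I).comp (eB (-B))) := by
  set A : V →ₗ[ℝ] V :=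
    (LinearMap.fst ℝ V (Dual ℝ V)).comp (J.comp (LinearMap.inl ℝ V (Dual ℝ V))) with hAdef
  set D : V →ₗ[ℝ] Dual ℝ V :=
    (LinearMap.snd ℝ V (Dual ℝ V)).comp (J.comp (LinearMap.inl ℝ V (Dual ℝ V))) with hDdef
  set E : Dual ℝ V →ₗ[ℝ] Dual ℝ V :=
    (LinearMap.snd ℝ V (Dual ℝ V)).comp (J.comp (LinearMap.inr ℝ V (Dual ℝ V))) with hEdef
  -- J maps V* into V*, so the first component of J (0, ξ) vanishes
  have hC : ∀ ξ : Dual ℝ V, (J (0, ξ)).1 = 0 := by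
    intro ξ
    have hmem : J (0, ξ) ∈ dualSub V := by
      rw [← hdual]
      exact Submodule.mem_map_of_mem (by simp [dualSub])
    simpa [dualSub] using hmem.1
  have hJ : ∀ (x : V) (ξ : Dual ℝ V), J (x, ξ) = (A x, D x + E ξ) := by
    intro x ξ
    have : (x, ξ) = ((x, 0) : V × Dual ℝ V) + (0, ξ) := by simp
    rw [this, map_add]
    have h1 : J (x, (0 : Dual ℝ V)) = (A x, D x) := by
      simp [hAdef, hDdef]
    have h2 : J ((0 : V), ξ) = (0, E ξ) := by
      refine Prod.ext (hC ξ) ?_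
      simp [hEdef]
    rw [h1, h2]
    simp
  -- A² = -1  and  D ∘ A + E ∘ D = 0
  have hsq' : ∀ x : V, (A (A x), D (A x) + E (D x)) = (-x, 0) := by
    intro x
    have := hsq (x, 0)
    rw [hJ x 0, map_zero, add_zero, hJ (A x) (D x)] at this
    simpa using this
  have hAA : ∀ x : V, A (A x) = -x := fun x => congrArg Prod.fst (hsq' x)
  have hDAE : ∀ x : V, D (A x) + E (D x) = 0 := fun x => congrArg Prod.snd (hsq' x)
  -- orthogonality on V × V
  have horthVV : ∀ x y : V, (D x) (A y) + (D y) (A x) = 0 := by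
    intro x y
    have := horth (x, 0) (y, 0)
    rw [hJ x 0, hJ y 0] at this
    simp only [natPairing, map_zero, add_zero, LinearMap.zero_apply] at this
    linarith
  -- (E ξ)(A y) = ξ y
  have hEA : ∀ (ξ : Dual ℝ V) (y : V), (E ξ) (A y) = ξ y := by
    intro ξ y
    have := horth (0, ξ) (y, 0)
    rw [hJ 0 ξ, hJ y 0] at this
    simp only [natPairing, map_zero, add_zero, zero_add, LinearMap.zero_apply] at this
    linarith
  -- E ξ = -ξ ∘ A
  have hE : ∀ (ξ : Dual ℝ V) (x : V), (E ξ) x = -(ξ (A x)) := by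
    intro ξ x
    have h1 : A (A (-x)) = x := by rw [hAA]; simp
    calc (E ξ) x = (E ξ) (A (A (-x))) := by rw [h1]
      _ = ξ (A (-x)) := hEA ξ (A (-x))
      _ = -(ξ (A x)) := by rw [map_neg, map_neg]
  -- D (A x) y = (D x) (A y)
  have hDA : ∀ x y : V, D (A x) y = (D x) (A y) := by
    intro x y
    have h := hDAE x
    have h' : D (A x) y + E (D x) y = 0 := by
      have := congrArg (fun f => f y) h
      simpa using this
    rw [hE (D x) y] at h'
    linarith
  refine ⟨-A, (-(1/2 : ℝ)) • (A.dualMap ∘ₗ D), ?_, ?_, ?_⟩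
  · intro x
    simp [hAA]
  · intro x y
    simp only [LinearMap.smul_apply, LinearMap.comp_apply, LinearMap.dualMap_apply',
      LinearMap.smul_apply]
    have := horthVV x y
    simp only [smul_eq_mul]
    nlinarith [horthVV x y]
  · apply LinearMap.ext
    rintro ⟨x, ξ⟩
    rw [hJ x ξ]
    simp only [eB, JI, LinearMap.comp_apply, LinearMap.prod_apply, Function.prod,
      LinearMap.fst_apply, LinearMap.snd_apply, LinearMap.add_apply,
      LinearMap.prodMap_apply, LinearMap.neg_apply, neg_neg, LinearMap.smul_apply,
      LinearMap.dualMap_apply']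
    refine Prod.ext rfl ?_
    apply LinearMap.ext
    intro y
    simp only [LinearMap.add_apply, LinearMap.smul_apply, LinearMap.dualMap_apply,
      LinearMap.neg_apply, LinearMap.comp_apply, LinearMap.dualMap_apply', hE ξ y,
      smul_eq_mul, map_neg]
    have h1 : (D x) (A (A y)) = -(D x) y := by rw [hAA]; simp
    have h2 : (D (A x)) (A y) = (D x) (A (A y)) := hDA x (A y)
    nlinarith [h1, h2]
end
end

section
/- (Pointwise normal form of symplectic type; the converse part of Example 2.7 of the paper.) Let J be an almost generalized complex structure on V with V* ∩ J(V*) = {0}. Then there exist an invertible linear map ω : V → V* which is skew and a skew linear map B : V → V* such that J = e^B ∘ J_ω ∘ e^{−B}, where J_ω : W → W is defined by J_ω(x,ξ) := (−ω^{-1}ξ, ωx). -/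
noncomputable section

open Module

variable {V : Type*} [AddCommGroup V] [Module ℝ V] [FiniteDimensional ℝ V]

/-- The generalized complex structure `J_ω (x, ξ) = (−ω⁻¹ξ, ωx)` of an invertible `ω : V → V*`. -/
def Jomega (ω : V ≃ₗ[ℝ] Dual ℝ V) : (V × Dual ℝ V) →ₗ[ℝ] (V × Dual ℝ V) :=
  LinearMap.prod (-(ω.symm.toLinearMap.comp (LinearMap.snd ℝ V (Dual ℝ V))))
    (ω.toLinearMap.comp (LinearMap.fst ℝ V (Dual ℝ V)))

/-- Pointwise normal form of symplectic type: an almost generalized complex structure `J` with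
`V* ∩ J(V*) = 0` is of the form `J = e^B ∘ J_ω ∘ e^{−B}` for an invertible skew `ω : V → V*`
and a skew map `B : V → V*`. -/
theorem symplectic_type_normal_form (J : (V × Dual ℝ V) →ₗ[ℝ] (V × Dual ℝ V))
    (horth : IsOrth J) (hsq : ∀ w, J (J w) = -w)
    (hnd : dualSub V ⊓ (dualSub V).map J = ⊥) :
    ∃ (ω : V ≃ₗ[ℝ] Dual ℝ V) (B : V →ₗ[ℝ] Dual ℝ V),
      (∀ x y, ω x y = -(ω y x)) ∧ (∀ x y, B x y = -(B y x)) ∧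
      J = (eB B).comp ((Jomega ω).comp (eB (-B))) := by
  classical
  set A : V →ₗ[ℝ] V :=
    (LinearMap.fst ℝ V (Dual ℝ V)).comp (J.comp (LinearMap.inl ℝ V (Dual ℝ V))) with hAdef
  set P : Dual ℝ V →ₗ[ℝ] V :=
    (LinearMap.fst ℝ V (Dual ℝ V)).comp (J.comp (LinearMap.inr ℝ V (Dual ℝ V))) with hPdef
  set Q : V →ₗ[ℝ] Dual ℝ V :=
    (LinearMap.snd ℝ V (Dual ℝ V)).comp (J.comp (LinearMap.inl ℝ V (Dual ℝ V))) with hQdef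
  set A' : Dual ℝ V →ₗ[ℝ] Dual ℝ V :=
    (LinearMap.snd ℝ V (Dual ℝ V)).comp (J.comp (LinearMap.inr ℝ V (Dual ℝ V))) with hA'def
  have hJdef : ∀ (x : V) (ξ : Dual ℝ V), J (x, ξ) = (A x + P ξ, Q x + A' ξ) := by
    intro x ξ
    have h : (x, ξ) = ((x, 0) : V × Dual ℝ V) + (0, ξ) := by simp
    rw [h, map_add]
    simp [hAdef, hPdef, hQdef, hA'def, Prod.ext_iff, LinearMap.comp_apply]
  have hJinj : Function.Injective J := by
    intro u v huv
    have : J (J u) = J (J v) := by rw [huv]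
    rw [hsq, hsq, neg_inj] at this
    exact this
  -- P is injective
  have hPinj : Function.Injective P := by
    rw [← LinearMap.ker_eq_bot, LinearMap.ker_eq_bot']
    intro ξ hξ
    have hmem : ((0 : V), A' ξ) ∈ dualSub V ⊓ (dualSub V).map J := by
      constructor
      · exact ⟨rfl, trivial⟩
      · refine ⟨((0 : V), ξ), ⟨rfl, trivial⟩, ?_⟩
        rw [hJdef]
        simp [hξ]
    rw [hnd] at hmem
    have hA'ξ : A' ξ = 0 := by
      have := congrArg Prod.snd hmem
      simpa using this
    have hJ0 : J ((0 : V), ξ) = 0 := by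
      rw [hJdef]; simp [hξ, hA'ξ]
    have : ((0 : V), ξ) = 0 := hJinj (by simpa using hJ0)
    have := congrArg Prod.snd this
    simpa using this
  have hPsurj : Function.Surjective P :=
    (LinearMap.injective_iff_surjective_of_finrank_eq_finrank
      (Subspace.dual_finrank_eq)).mp hPinj
  let Pe : Dual ℝ V ≃ₗ[ℝ] V := LinearEquiv.ofBijective P ⟨hPinj, hPsurj⟩
  let ω : V ≃ₗ[ℝ] Dual ℝ V := Pe.symm.trans (LinearEquiv.neg ℝ)
  have hωP : ∀ x : V, P (ω x) = -x := by
    intro x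
    show P (-(Pe.symm x)) = -x
    rw [map_neg]
    have : P (Pe.symm x) = Pe (Pe.symm x) := rfl
    rw [this, Pe.apply_symm_apply]
  have hωsymm : ∀ ξ : Dual ℝ V, ω.symm ξ = -(P ξ) := by
    intro ξ
    have hPa : P (ω (-(P ξ))) = P ξ := by rw [hωP, neg_neg]
    have h : ω (-(P ξ)) = ξ := hPinj hPa
    rw [← h, ω.symm_apply_apply, hPa]
  -- adjoint relation
  have hnegPair : ∀ (w u : V × Dual ℝ V), natPairing w (-u) = -(natPairing w u) := by
    intro w u
    simp [natPairing]
    ring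
  have hadj : ∀ w u : V × Dual ℝ V, natPairing (J w) u = -(natPairing w (J u)) := by
    intro w u
    have hu : J (-(J u)) = u := by rw [map_neg, hsq, neg_neg]
    calc natPairing (J w) u = natPairing (J w) (J (-(J u))) := by rw [hu]
      _ = natPairing w (-(J u)) := horth w _
      _ = -(natPairing w (J u)) := hnegPair w _
  -- identities from J² = -1
  have hsq1 : ∀ x : V, A (A x) + P (Q x) = -x := by
    intro x
    have h := hsq ((x, 0) : V × Dual ℝ V)
    rw [hJdef, hJdef] at h
    have := congrArg Prod.fst h
    simpa using this
  have hsq2 : ∀ ξ : Dual ℝ V, A (P ξ) + P (A' ξ) = 0 := by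
    intro ξ
    have h := hsq (((0 : V), ξ) : V × Dual ℝ V)
    rw [hJdef, hJdef] at h
    have := congrArg Prod.fst h
    simpa using this
  -- skewness of P
  have hPskew : ∀ ξ η : Dual ℝ V, η (P ξ) = -(ξ (P η)) := by
    intro ξ η
    have h := hadj ((0 : V), ξ) ((0 : V), η)
    rw [hJdef, hJdef] at h
    simp only [natPairing, map_zero] at h
    simp at h
    linarith [h]
  -- A' is -A*
  have hA'adj : ∀ (ξ : Dual ℝ V) (x : V), A' ξ x = -(ξ (A x)) := by
    intro ξ x
    have h := hadj ((0 : V), ξ) ((x, (0 : Dual ℝ V)))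
    rw [hJdef, hJdef] at h
    simp only [natPairing, map_zero] at h
    simp at h
    linarith [h]
  have hωskew : ∀ x y : V, ω x y = -(ω y x) := by
    intro x y
    have h := hPskew (ω x) (ω y)
    rw [hωP, hωP] at h
    simp at h
    linarith [h]
  have hA'ω : ∀ x : V, A' (ω x) = -(ω (A x)) := by
    intro x
    apply hPinj
    rw [map_neg, hωP, neg_neg]
    have h2 := hsq2 (ω x)
    rw [hωP, map_neg, neg_add_eq_zero] at h2
    exact h2.symm
  have hBskew : ∀ x y : V, ω (A x) y = -(ω (A y) x) := by
    intro x y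
    have h1 : ω (A x) y = (ω x) (A y) := by
      have := congrFun (congrArg DFunLike.coe (hA'ω x)) y
      rw [hA'adj (ω x) y] at this
      simp at this
      linarith [this]
    rw [h1, hωskew x (A y)]
  refine ⟨ω, ω.toLinearMap.comp A, hωskew, ?_, ?_⟩
  · intro x y
    exact hBskew x y
  · apply LinearMap.ext
    rintro ⟨x, ξ⟩
    rw [hJdef]
    simp only [LinearMap.comp_apply, eB, Jomega, LinearMap.prod_apply, Pi.prod, Function.prod,
      LinearMap.add_apply, LinearMap.fst_apply, LinearMap.snd_apply,
      LinearMap.neg_apply, LinearMap.coe_comp, Function.comp_apply,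
      LinearEquiv.coe_coe]
    have hfst : -(ω.symm (ξ + -(ω (A x)))) = A x + P ξ := by
      rw [hωsymm, neg_neg, map_add, map_neg, hωP, neg_neg]
      abel
    have hQ : Q x = ω (x + A (A x)) := by
      apply hPinj
      rw [hωP]
      have h := hsq1 x
      have h2 : P (Q x) = -x - A (A x) := by rw [← h]; abel
      rw [h2]; abel
    have hAP : ω (A (P ξ)) = A' ξ := by
      apply ω.symm.injective
      rw [ω.symm_apply_apply, hωsymm]
      exact eq_neg_of_add_eq_zero_left (hsq2 ξ)
    rw [Prod.mk.injEq]
    refine ⟨hfst.symm, ?_⟩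
    rw [hfst, map_add, map_add, hQ, ← hAP, map_add]
    abel
end
end

section
/- (Interpolation inequality for C^k norms; Proposition 6.6(1) of the paper, after Hamilton.) For all integers 0 ≤ k ≤ l ≤ m with k < m and every dimension d ≥ 1, there is a constant C depending only on k, l, m and d such that every smooth function f : ℝ^d → ℝ with bounded derivatives satisfies |f|_l ≤ C · |f|_k^{(m−l)/(m−k)} · |f|_m^{(l−k)/(m−k)}. -/
/-!
Restricting the iterated derivatives to lines and applying the one-variable Landau
inequality `‖g' 0‖² ≤ 8 sup ‖g‖ sup ‖g''‖` gives `|f|_{n+1}² ≤ 8 |f|_n |f|_{n+2}`. The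
weighted sequence `c_j = 8^(j²) |f|_j` is then log-convex, `c_{j+1}² ≤ c_j c_{j+2}`, hence
`c_l^(m-k) ≤ c_k^(m-l) c_m^(l-k)`; taking `(m-k)`-th roots gives the inequality.
-/

noncomputable section

/-- The `C^j` sup-norm of a map on `ℝ^d`: the supremum over all points of the maximum of the
norms of the iterated derivatives of order at most `j`. -/
def cnorm {d : ℕ} {F : Type*} [NormedAddCommGroup F] [NormedSpace ℝ F]
    (j : ℕ) (f : (Fin d → ℝ) → F) : ℝ :=
  ⨆ p : (Fin d → ℝ) × Fin (j + 1), ‖iteratedFDeriv ℝ (p.2 : ℕ) f p.1‖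

/-- `f` has bounded derivatives of all orders. -/
def BoundedDerivs {d : ℕ} {F : Type*} [NormedAddCommGroup F] [NormedSpace ℝ F]
    (f : (Fin d → ℝ) → F) : Prop :=
  ∀ j : ℕ, ∃ C : ℝ, ∀ x, ‖iteratedFDeriv ℝ j f x‖ ≤ C

open Set

section Landau

variable {F : Type*} [NormedAddCommGroup F] [NormedSpace ℝ F]

theorem norm_deriv_zero_le_of_bounds {g g' g'' : ℝ → F} (hg : ∀ t, HasDerivAt g (g' t) t)
    (hg' : ∀ t, HasDerivAt g' (g'' t) t) {M₀ M₂ : ℝ} (hM₀ : ∀ t, ‖g t‖ ≤ M₀)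
    (hM₂ : ∀ t, ‖g'' t‖ ≤ M₂) {h : ℝ} (hh : 0 < h) :
    ‖g' 0‖ ≤ 2 * M₀ / h + M₂ * h := by
  have hM₂0 : 0 ≤ M₂ := (hM₂ 0).trans' (norm_nonneg _)
  have hg'_lip : ∀ t ∈ Icc 0 h, ‖g' t - g' 0‖ ≤ M₂ * (t - 0) :=
    norm_image_sub_le_of_norm_deriv_le_segment' (fun t _ => (hg' t).hasDerivWithinAt)
      fun t _ => hM₂ t
  -- the Taylor remainder `g t - g 0 - t • g' 0` has derivative `g' t - g' 0`
  have htaylor : ‖(g h - h • g' 0) - (g 0 - (0 : ℝ) • g' 0)‖ ≤ M₂ * h * (h - 0) :=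
    norm_image_sub_le_of_norm_deriv_le_segment' (f := fun t => g t - t • g' 0)
      (fun t _ => ((hg t).sub ((hasDerivAt_id t).smul_const (g' 0))).hasDerivWithinAt
        |>.congr_deriv (by simp))
      (fun t ht => (hg'_lip t (Ico_subset_Icc_self ht)).trans (by gcongr; linarith [ht.2]))
      h ⟨hh.le, le_rfl⟩
  have hmain : h * ‖g' 0‖ ≤ 2 * M₀ + M₂ * h * h :=
    calc h * ‖g' 0‖ = ‖(g h - g 0) - ((g h - h • g' 0) - (g 0 - (0 : ℝ) • g' 0))‖ := by
          rw [zero_smul, sub_zero, sub_sub_sub_cancel_right, sub_sub_cancel, norm_smul,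
            Real.norm_of_nonneg hh.le]
      _ ≤ (‖g h‖ + ‖g 0‖) + M₂ * h * (h - 0) :=
          (norm_sub_le _ _).trans (add_le_add (norm_sub_le _ _) htaylor)
      _ ≤ 2 * M₀ + M₂ * h * h := by linarith [hM₀ h, hM₀ 0]
  rw [div_add' _ _ _ hh.ne', le_div_iff₀ hh]
  linarith

theorem sq_le_of_forall_le_div_add_mul {A M₀ M₂ : ℝ} (hA : 0 ≤ A) (hM₀ : 0 ≤ M₀)
    (hM₂ : 0 ≤ M₂) (hbound : ∀ h > 0, A ≤ 2 * M₀ / h + M₂ * h) : A ^ 2 ≤ 8 * M₀ * M₂ := by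
  rcases hA.eq_or_lt with rfl | hA
  · rw [zero_pow two_ne_zero]; positivity
  rcases hM₂.eq_or_lt with rfl | hM₂
  · have := hbound ((2 * M₀ + 1) / A) (by positivity)
    rw [zero_mul, add_zero, div_div_eq_mul_div, le_div_iff₀ (by positivity)] at this
    nlinarith
  · have := hbound (A / (2 * M₂)) (by positivity)
    rw [show 2 * M₀ / (A / (2 * M₂)) + M₂ * (A / (2 * M₂)) = 4 * M₀ * M₂ / A + A / 2 by
      field_simp; ring] at this
    have hhalf : A / 2 * A ≤ 4 * M₀ * M₂ := (le_div_iff₀ hA).mp (by linarith)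
    linarith

theorem norm_deriv_zero_sq_le {g g' g'' : ℝ → F} (hg : ∀ t, HasDerivAt g (g' t) t)
    (hg' : ∀ t, HasDerivAt g' (g'' t) t) {M₀ M₂ : ℝ} (hM₀ : ∀ t, ‖g t‖ ≤ M₀)
    (hM₂ : ∀ t, ‖g'' t‖ ≤ M₂) : ‖g' 0‖ ^ 2 ≤ 8 * M₀ * M₂ :=
  sq_le_of_forall_le_div_add_mul (norm_nonneg _) ((hM₀ 0).trans' (norm_nonneg _))
    ((hM₂ 0).trans' (norm_nonneg _)) fun _ hh => norm_deriv_zero_le_of_bounds hg hg' hM₀ hM₂ hh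

end Landau

section IteratedFDeriv

variable {E F : Type*} [NormedAddCommGroup E] [NormedSpace ℝ E] [NormedAddCommGroup F]
  [NormedSpace ℝ F]

theorem hasDerivAt_iteratedFDeriv_apply_line {f : E → F} {N : WithTop ℕ∞} {n : ℕ}
    (hf : ContDiff ℝ N f) (hn : n < N) (x v : E) (w : Fin n → E) (t : ℝ) :
    HasDerivAt (fun s : ℝ => iteratedFDeriv ℝ n f (x + s • v) w)
      (iteratedFDeriv ℝ (n + 1) f (x + t • v) (Fin.cons v w)) t := by
  have hline : HasDerivAt (fun s : ℝ => x + s • v) v t := by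
    simpa using ((hasDerivAt_id t).smul_const v).const_add x
  rw [iteratedFDeriv_succ_apply_left, Fin.cons_zero, Fin.tail_cons]
  exact (ContinuousMultilinearMap.apply ℝ (fun _ : Fin n => E) F w).hasFDerivAt.comp_hasDerivAt
    t ((hf.differentiable_iteratedFDeriv hn _).hasFDerivAt.comp_hasDerivAt t hline)

theorem norm_iteratedFDeriv_succ_sq_le {f : E → F} {n : ℕ} (hf : ContDiff ℝ (n + 2) f)
    {M₀ M₂ : ℝ} (hM₀ : ∀ y, ‖iteratedFDeriv ℝ n f y‖ ≤ M₀)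
    (hM₂ : ∀ y, ‖iteratedFDeriv ℝ (n + 2) f y‖ ≤ M₂) (x : E) :
    ‖iteratedFDeriv ℝ (n + 1) f x‖ ^ 2 ≤ 8 * M₀ * M₂ := by
  have hM₀0 : 0 ≤ M₀ := (hM₀ x).trans' (norm_nonneg _)
  have hM₂0 : 0 ≤ M₂ := (hM₂ x).trans' (norm_nonneg _)
  set B := Real.sqrt (8 * M₀ * M₂)
  have hB : 0 ≤ B := Real.sqrt_nonneg _
  suffices ‖iteratedFDeriv ℝ (n + 1) f x‖ ≤ B by
    calc _ ≤ B ^ 2 := by gcongr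
      _ = 8 * M₀ * M₂ := Real.sq_sqrt (by positivity)
  refine ContinuousMultilinearMap.opNorm_le_bound hB fun v => ?_
  -- restrict to the line through `x` in direction `v 0`, with the other arguments frozen
  set P := ∏ i, ‖Fin.tail v i‖
  have hP : 0 ≤ P := Finset.prod_nonneg fun _ _ => norm_nonneg _
  have hderiv : ∀ (j : ℕ) (w : Fin j → E), j < n + 2 → ∀ t, HasDerivAt
      (fun s : ℝ => iteratedFDeriv ℝ j f (x + s • v 0) w)
      (iteratedFDeriv ℝ (j + 1) f (x + t • v 0) (Fin.cons (v 0) w)) t :=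
    fun j w hj => hasDerivAt_iteratedFDeriv_apply_line hf (by exact_mod_cast hj) x (v 0) w
  have hsq := norm_deriv_zero_sq_le (hderiv n (Fin.tail v) (by omega))
    (hderiv (n + 1) _ (by omega)) (M₀ := M₀ * P) (M₂ := M₂ * (‖v 0‖ * (‖v 0‖ * P)))
    (fun t => ((iteratedFDeriv ℝ n f _).le_opNorm _).trans (by gcongr; exact hM₀ _))
    (fun t => ((iteratedFDeriv ℝ (n + 2) f _).le_opNorm _).trans_eq
      (by simp only [Fin.prod_univ_succ, Fin.cons_zero, Fin.cons_succ]; rfl) |>.trans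
      (by gcongr; exact hM₂ _))
  rw [zero_smul, add_zero, Fin.cons_self_tail] at hsq
  rw [Fin.prod_univ_succ]
  refine (pow_le_pow_iff_left₀ (norm_nonneg _) (by positivity) two_ne_zero).mp
    (hsq.trans_eq ?_)
  rw [mul_pow, Real.sq_sqrt (by positivity)]
  simp only [P, Fin.tail]
  ring

end IteratedFDeriv

section CNorm

variable {d : ℕ} {F : Type*} [NormedAddCommGroup F] [NormedSpace ℝ F] {f : (Fin d → ℝ) → F}

theorem cnorm_nonneg (j : ℕ) (f : (Fin d → ℝ) → F) : 0 ≤ cnorm j f :=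
  Real.iSup_nonneg fun _ => norm_nonneg _

theorem cnorm_le {j : ℕ} {B : ℝ}
    (hB : ∀ x (i : Fin (j + 1)), ‖iteratedFDeriv ℝ i f x‖ ≤ B) : cnorm j f ≤ B :=
  ciSup_le fun p => hB p.1 p.2

theorem BoundedDerivs.norm_iteratedFDeriv_le_cnorm (hb : BoundedDerivs f) {i j : ℕ}
    (hij : i ≤ j) (x : Fin d → ℝ) : ‖iteratedFDeriv ℝ i f x‖ ≤ cnorm j f := by
  choose C hC using hb
  refine le_ciSup (f := fun p : (Fin d → ℝ) × Fin (j + 1) => ‖iteratedFDeriv ℝ p.2 f p.1‖)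
    ⟨⨆ i : Fin (j + 1), C i, ?_⟩ (x, ⟨i, by omega⟩)
  rintro _ ⟨p, rfl⟩
  exact (hC _ _).trans
    (le_ciSup (f := fun i : Fin (j + 1) => C i) (Finite.bddAbove_range _) p.2)

theorem BoundedDerivs.cnorm_mono (hb : BoundedDerivs f) {i j : ℕ} (hij : i ≤ j) :
    cnorm i f ≤ cnorm j f :=
  cnorm_le fun x k => hb.norm_iteratedFDeriv_le_cnorm (by omega) x

theorem BoundedDerivs.cnorm_succ_sq_le (hb : BoundedDerivs f) {n : ℕ}
    (hf : ContDiff ℝ (n + 2) f) : cnorm (n + 1) f ^ 2 ≤ 8 * cnorm n f * cnorm (n + 2) f := by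
  set B := Real.sqrt (8 * cnorm n f * cnorm (n + 2) f)
  have hprod : 0 ≤ 8 * cnorm n f * cnorm (n + 2) f := by
    have := cnorm_nonneg n f; have := cnorm_nonneg (n + 2) f; positivity
  have hnB : cnorm n f ≤ B := Real.le_sqrt_of_sq_le <| by
    have := cnorm_nonneg n f; nlinarith [hb.cnorm_mono (show n ≤ n + 2 by omega)]
  have hsuccB : cnorm (n + 1) f ≤ B := by
    refine cnorm_le fun x i => ?_
    rcases Nat.lt_succ_iff_lt_or_eq.mp i.isLt with hi | hi
    · exact (hb.norm_iteratedFDeriv_le_cnorm (by omega) x).trans hnB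
    · rw [hi]
      exact Real.le_sqrt_of_sq_le <| norm_iteratedFDeriv_succ_sq_le hf
        (hb.norm_iteratedFDeriv_le_cnorm le_rfl) (hb.norm_iteratedFDeriv_le_cnorm le_rfl) x
  calc cnorm (n + 1) f ^ 2 ≤ B ^ 2 := by gcongr; exact cnorm_nonneg _ f
    _ = 8 * cnorm n f * cnorm (n + 2) f := Real.sq_sqrt hprod

end CNorm

structure IsLogConvexSeq (c : ℕ → ℝ) : Prop where
  nonneg : ∀ j, 0 ≤ c j
  sq_le_mul : ∀ j, c (j + 1) ^ 2 ≤ c j * c (j + 2)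

namespace IsLogConvexSeq

variable {c : ℕ → ℝ}

theorem succ_mul_le_mul_succ (hc : IsLogConvexSeq c) {i j : ℕ} (hji : j ≤ i) :
    c (j + 1) * c i ≤ c j * c (i + 1) := by
  induction i, hji using Nat.le_induction with
  | base => rw [mul_comm]
  | succ i _ ih =>
    rcases (hc.nonneg (i + 1)).eq_or_lt with hz | hpos
    · rw [← hz, mul_zero]
      exact mul_nonneg (hc.nonneg _) (hc.nonneg _)
    · refine le_of_mul_le_mul_right ?_ hpos
      calc c (j + 1) * c (i + 1) * c (i + 1) = c (j + 1) * c (i + 1) ^ 2 := by ring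
        _ ≤ c (j + 1) * (c i * c (i + 2)) :=
            mul_le_mul_of_nonneg_left (hc.sq_le_mul i) (hc.nonneg _)
        _ = c (j + 1) * c i * c (i + 2) := by ring
        _ ≤ c j * c (i + 1) * c (i + 2) := mul_le_mul_of_nonneg_right ih (hc.nonneg _)
        _ = c j * c (i + 1 + 1) * c (i + 1) := by ring

theorem mul_pow_le (hc : IsLogConvexSeq c) {k m : ℕ} (r : ℕ) (hrm : k + r ≤ m + 1) :
    c (k + r) * c m ^ r ≤ c k * c (m + 1) ^ r := by
  induction r with
  | zero => simp
  | succ r ih =>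
    calc c (k + (r + 1)) * c m ^ (r + 1) = c (k + r + 1) * c m * c m ^ r := by ring_nf
      _ ≤ c (k + r) * c (m + 1) * c m ^ r :=
          mul_le_mul_of_nonneg_right (hc.succ_mul_le_mul_succ (by omega))
            (pow_nonneg (hc.nonneg m) r)
      _ = c (k + r) * c m ^ r * c (m + 1) := by ring
      _ ≤ c k * c (m + 1) ^ r * c (m + 1) :=
          mul_le_mul_of_nonneg_right (ih (by omega)) (hc.nonneg _)
      _ = c k * c (m + 1) ^ (r + 1) := by ring

theorem pow_le_pow_mul_pow (hc : IsLogConvexSeq c) (k r q : ℕ) :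
    c (k + r) ^ (r + q) ≤ c k ^ q * c (k + r + q) ^ r := by
  induction q with
  | zero => simp
  | succ q ih =>
    calc c (k + r) ^ (r + (q + 1)) = c (k + r) * c (k + r) ^ (r + q) := by ring
      _ ≤ c (k + r) * (c k ^ q * c (k + r + q) ^ r) := mul_le_mul_of_nonneg_left ih (hc.nonneg _)
      _ = c k ^ q * (c (k + r) * c (k + r + q) ^ r) := by ring
      _ ≤ c k ^ q * (c k * c (k + r + q + 1) ^ r) :=
          mul_le_mul_of_nonneg_left (hc.mul_pow_le r (by omega))
            (pow_nonneg (hc.nonneg k) q)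
      _ = c k ^ (q + 1) * c (k + r + (q + 1)) ^ r := by ring_nf

end IsLogConvexSeq

theorem isLogConvexSeq_pow_sq_mul {a : ℕ → ℝ} {K : ℝ} (hK : 1 ≤ K) (ha₀ : ∀ j, 0 ≤ a j)
    (ha : ∀ j, a (j + 1) ^ 2 ≤ K * a j * a (j + 2)) :
    IsLogConvexSeq fun j => K ^ (j ^ 2) * a j where
  nonneg j := mul_nonneg (pow_nonneg (by linarith) _) (ha₀ j)
  sq_le_mul j := calc
    (K ^ ((j + 1) ^ 2) * a (j + 1)) ^ 2 = K ^ (2 * (j + 1) ^ 2) * a (j + 1) ^ 2 := by ring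
    _ ≤ K ^ (2 * (j + 1) ^ 2) * (K * a j * a (j + 2)) := by gcongr; exact ha j
    _ = K ^ (2 * (j + 1) ^ 2 + 1) * (a j * a (j + 2)) := by ring
    _ ≤ K ^ (j ^ 2 + (j + 2) ^ 2) * (a j * a (j + 2)) :=
        mul_le_mul_of_nonneg_right (pow_le_pow_right₀ hK (by ring_nf; omega))
          (mul_nonneg (ha₀ j) (ha₀ _))
    _ = K ^ (j ^ 2) * a j * (K ^ ((j + 2) ^ 2) * a (j + 2)) := by ring

theorem pow_le_mul_pow_mul_pow_of_sq_le {a : ℕ → ℝ} {K : ℝ} (hK : 1 ≤ K)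
    (ha₀ : ∀ j, 0 ≤ a j) (ha : ∀ j, a (j + 1) ^ 2 ≤ K * a j * a (j + 2)) (k r q : ℕ) :
    a (k + r) ^ (r + q) ≤
      K ^ (k ^ 2 * q + (k + r + q) ^ 2 * r) * a k ^ q * a (k + r + q) ^ r :=
  calc a (k + r) ^ (r + q) ≤ K ^ ((k + r) ^ 2 * (r + q)) * a (k + r) ^ (r + q) :=
        le_mul_of_one_le_left (pow_nonneg (ha₀ _) _) (one_le_pow₀ hK)
    _ = (K ^ ((k + r) ^ 2) * a (k + r)) ^ (r + q) := by rw [mul_pow, pow_mul]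
    _ ≤ (K ^ (k ^ 2) * a k) ^ q * (K ^ ((k + r + q) ^ 2) * a (k + r + q)) ^ r :=
        (isLogConvexSeq_pow_sq_mul hK ha₀ ha).pow_le_pow_mul_pow k r q
    _ = K ^ (k ^ 2 * q + (k + r + q) ^ 2 * r) * a k ^ q * a (k + r + q) ^ r := by
        rw [mul_pow, mul_pow, ← pow_mul, ← pow_mul, pow_add]; ring

theorem le_rpow_mul_rpow_mul_rpow_of_pow_le {x y z D : ℝ} {q r : ℕ} (hx : 0 ≤ x)
    (hy : 0 ≤ y) (hz : 0 ≤ z) (hD : 0 ≤ D) (hqr : r + q ≠ 0)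
    (h : x ^ (r + q) ≤ D * y ^ q * z ^ r) :
    x ≤ D ^ ((r + q : ℝ)⁻¹) * y ^ ((q : ℝ) / (r + q)) * z ^ ((r : ℝ) / (r + q)) := by
  have hpow : ∀ {w : ℝ} (n : ℕ), 0 ≤ w →
      (w ^ n) ^ ((r + q : ℝ)⁻¹) = w ^ ((n : ℝ) / (r + q)) := fun n hw => by
    rw [← Real.rpow_natCast, ← Real.rpow_mul hw, div_eq_mul_inv]
  calc x = (x ^ (r + q)) ^ (((r + q : ℕ) : ℝ)⁻¹) := (Real.pow_rpow_inv_natCast hx hqr).symm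
    _ ≤ (D * y ^ q * z ^ r) ^ (((r + q : ℕ) : ℝ)⁻¹) := by gcongr
    _ = _ := by
        push_cast
        rw [Real.mul_rpow (by positivity) (by positivity), Real.mul_rpow hD (by positivity),
          hpow q hy, hpow r hz]

theorem cnorm_interpolation_general (k l m d : ℕ) (hkl : k ≤ l) (hlm : l ≤ m) (hkm : k < m) :
    ∃ C : ℝ, ∀ f : (Fin d → ℝ) → ℝ, ContDiff ℝ (⊤ : ℕ∞) f → BoundedDerivs f →
      cnorm l f ≤ C * cnorm k f ^ (((m : ℝ) - l) / ((m : ℝ) - k))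
        * cnorm m f ^ (((l : ℝ) - k) / ((m : ℝ) - k)) := by
  obtain ⟨r, rfl⟩ := Nat.exists_eq_add_of_le hkl
  obtain ⟨q, rfl⟩ := Nat.exists_eq_add_of_le hlm
  refine ⟨((8 : ℝ) ^ (k ^ 2 * q + (k + r + q) ^ 2 * r)) ^ ((r + q : ℝ)⁻¹), fun f hf hb => ?_⟩
  have hsq : ∀ j, cnorm (j + 1) f ^ 2 ≤ 8 * cnorm j f * cnorm (j + 2) f := fun j =>
    hb.cnorm_succ_sq_le (hf.of_le (WithTop.coe_le_coe.mpr le_top))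
  have hm_sub_k : ((k + r + q : ℕ) : ℝ) - k = r + q := by push_cast; ring
  have hm_sub_l : ((k + r + q : ℕ) : ℝ) - (k + r : ℕ) = q := by push_cast; ring
  have hl_sub_k : ((k + r : ℕ) : ℝ) - k = r := by push_cast; ring
  rw [hm_sub_k, hm_sub_l, hl_sub_k]
  exact le_rpow_mul_rpow_mul_rpow_of_pow_le (cnorm_nonneg _ f) (cnorm_nonneg k f)
    (cnorm_nonneg _ f) (by positivity) (by omega)
    (pow_le_mul_pow_mul_pow_of_sq_le (by norm_num) (cnorm_nonneg · f) hsq k r q)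

/-- Interpolation inequality for `C^k` norms (Hamilton):
`|f|_l ≤ C |f|_k^((m-l)/(m-k)) |f|_m^((l-k)/(m-k))` for `k ≤ l ≤ m`, `k < m`. -/
theorem cnorm_interpolation (k l m d : ℕ) (hkl : k ≤ l) (hlm : l ≤ m) (hkm : k < m)
    (hd : 1 ≤ d) :
    ∃ C : ℝ, ∀ f : (Fin d → ℝ) → ℝ, ContDiff ℝ (⊤ : ℕ∞) f → BoundedDerivs f →
      cnorm l f ≤ C * cnorm k f ^ (((m : ℝ) - l) / ((m : ℝ) - k))
        * cnorm m f ^ (((l : ℝ) - k) / ((m : ℝ) - k)) :=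
  cnorm_interpolation_general k l m d hkl hlm hkm
end
end

section
/- (Tame estimate for inversion; inequality (8.17) in the paper, proved there by induction.) Let F be a finite-dimensional real normed vector space and End(F) its space of continuous linear endomorphisms with the operator norm. For every integer k ≥ 0, every dimension d ≥ 1 and every M > 0, there is a constant C depending only on k, d, F and M such that: if κ : ℝ^d → End(F) is smooth with bounded derivatives, κ(x) is invertible for every x ∈ ℝ^d, sup_x ‖κ(x)^{-1}‖ ≤ M and |κ|_1 ≤ M, then the map κ^{-1} : x ↦ κ(x)^{-1} satisfies |κ^{-1}|_k ≤ C (1 + |κ|_k). -/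
set_option maxHeartbeats 1600000

open Set Metric Filter Topology

noncomputable section

/-- cross-ratio lemma for log-convex sequences -/
lemma chain_cross {n : ℕ} {b : ℕ → ℝ} (hb : ∀ j, 0 ≤ b j)
    (h : ∀ j, 0 < j → j < n → b j ^ 2 ≤ b (j-1) * b (j+1)) :
    ∀ i j, i ≤ j → j < n → b (i+1) * b j ≤ b i * b (j+1) := by
  intro i j hij hjn
  induction j with
  | zero => interval_cases i; exact (mul_comm _ _).le
  | succ j IH =>
    rcases Nat.eq_or_lt_of_le hij with rfl | hij'
    · exact (mul_comm _ _).le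
    · have hij2 : i ≤ j := Nat.lt_succ_iff.mp hij'
      have hjn' : j < n := Nat.lt_of_succ_lt hjn
      have IH' := IH hij2 hjn'
      have hj1 : b (j+1) ^ 2 ≤ b j * b (j+2) := by
        have := h (j+1) (Nat.succ_pos j) hjn
        simpa using this
      rcases eq_or_lt_of_le (hb (j+1)) with hz | hpos
      · calc b (i+1) * b (j+1) = 0 := by rw [← hz]; ring
          _ ≤ b i * b (j+2) := mul_nonneg (hb i) (hb (j+2))
      · have hbj : 0 < b j := by
          rcases eq_or_lt_of_le (hb j) with hz | h'
          · exfalso; rw [← hz, zero_mul] at hj1; nlinarith [pow_pos hpos 2]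
          · exact h'
        have key : (b (i+1) * b (j+1)) * (b j * b (j+1)) ≤ (b i * b (j+2)) * (b j * b (j+1)) := by
          calc (b (i+1) * b (j+1)) * (b j * b (j+1)) = (b (i+1) * b j) * b (j+1) ^ 2 := by ring
            _ ≤ (b i * b (j+1)) * (b j * b (j+2)) := by
                apply mul_le_mul IH' hj1 (sq_nonneg _) (mul_nonneg (hb i) (hb (j+1)))
            _ = (b i * b (j+2)) * (b j * b (j+1)) := by ring
        exact le_of_mul_le_mul_right key (mul_pos hbj hpos)

lemma chain_step {n : ℕ} {b : ℕ → ℝ} (hb : ∀ j, 0 ≤ b j)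
    (h : ∀ j, 0 < j → j < n → b j ^ 2 ≤ b (j-1) * b (j+1)) :
    ∀ j r, j + r ≤ n → b (j+1) ^ r * b j ≤ b j ^ r * b (j + r) := by
  intro j r
  induction r with
  | zero => simp
  | succ r IH =>
    intro hrn
    have h1 : b (j+1) ^ (r+1) * b j = b (j+1) * (b (j+1) ^ r * b j) := by ring
    have h2 := IH (by omega)
    calc b (j+1) ^ (r+1) * b j = b (j+1) * (b (j+1) ^ r * b j) := by ring
      _ ≤ b (j+1) * (b j ^ r * b (j + r)) := by
          exact mul_le_mul_of_nonneg_left h2 (hb _)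
      _ = b j ^ r * (b (j+1) * b (j + r)) := by ring
      _ ≤ b j ^ r * (b j * b (j + r + 1)) := by
          apply mul_le_mul_of_nonneg_left _ (pow_nonneg (hb j) r)
          have := chain_cross hb h j (j + r) (by omega) (by omega)
          simpa [Nat.add_assoc] using this
      _ = b j ^ (r+1) * b (j + (r + 1)) := by rw [show j + (r+1) = j + r + 1 by omega]; ring

lemma chain_interp {n : ℕ} {b : ℕ → ℝ} (hb : ∀ j, 0 ≤ b j)
    (h : ∀ j, 0 < j → j < n → b j ^ 2 ≤ b (j-1) * b (j+1)) :
    ∀ j, j ≤ n → b j ^ n ≤ b 0 ^ (n - j) * b n ^ j := by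
  intro j
  induction j with
  | zero => simp
  | succ j IH =>
    intro hjn
    have IH' := IH (by omega)
    rcases Nat.eq_or_lt_of_le hjn with hEq | hlt
    · subst hEq; simp
    · rcases eq_or_lt_of_le (hb j) with hz | hbj
      · -- b j = 0 forces b (j+1) = 0
        have h1 := h (j+1) (Nat.succ_pos j) hlt
        simp only [Nat.add_sub_cancel] at h1
        rw [← hz, zero_mul] at h1
        have hb1 : b (j+1) = 0 := by nlinarith [sq_nonneg (b (j+1)), hb (j+1)]
        rw [hb1, zero_pow (by omega : n ≠ 0)]
        exact mul_nonneg (pow_nonneg (hb 0) _) (pow_nonneg (hb _) _)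
      · obtain ⟨m, rfl⟩ : ∃ m, n = j + 1 + m := ⟨n - (j+1), by omega⟩
        set n := j + 1 + m with hn
        have hnj : n - j = m + 1 := by omega
        have hnj1 : n - (j+1) = m := by omega
        rw [hnj1]
        rw [hnj] at IH'
        have hQ := chain_step hb h j (m+1) (by omega)
        rw [show j + (m+1) = n by omega] at hQ
        have hQn : (b (j+1) ^ (m+1) * b j) ^ n ≤ (b j ^ (m+1) * b n) ^ n :=
          pow_le_pow_left₀ (mul_nonneg (pow_nonneg (hb _) _) (hb _)) hQ n
        have hIHn : (b j ^ n) ^ m ≤ ((b 0 ^ (m+1) * b n ^ j)) ^ m :=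
          pow_le_pow_left₀ (pow_nonneg (hb j) n) IH' m
        have key : (b (j+1) ^ n) ^ (m+1) * b j ^ n ≤
            b j ^ n * (b 0 ^ m * b n ^ (j+1)) ^ (m+1) := by
          calc (b (j+1) ^ n) ^ (m+1) * b j ^ n
              = (b (j+1) ^ (m+1) * b j) ^ n := by
                rw [mul_pow, ← pow_mul, ← pow_mul, mul_comm (m+1) n]
            _ ≤ (b j ^ (m+1) * b n) ^ n := hQn
            _ = b j ^ n * ((b j ^ n) ^ m * b n ^ n) := by
                rw [mul_pow, ← pow_mul, ← pow_mul]
                rw [show (m+1) * n = n + n * m by ring, pow_add, mul_assoc]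
            _ ≤ b j ^ n * ((b 0 ^ (m+1) * b n ^ j) ^ m * b n ^ n) := by
                apply mul_le_mul_of_nonneg_left _ (pow_nonneg (hb j) n)
                exact mul_le_mul_of_nonneg_right hIHn (pow_nonneg (hb n) n)
            _ = b j ^ n * (b 0 ^ m * b n ^ (j+1)) ^ (m+1) := by
                rw [mul_pow, mul_pow, ← pow_mul, ← pow_mul, ← pow_mul, ← pow_mul]
                rw [show (m+1) * m = m * (m+1) by ring]
                rw [show (j+1) * (m+1) = j * m + n by rw [hn]; ring, pow_add]
                ring
        have hcancel : (b (j+1) ^ n) ^ (m+1) ≤ (b 0 ^ m * b n ^ (j+1)) ^ (m+1) := by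
          have hbjn : 0 < b j ^ n := pow_pos hbj n
          have := (mul_le_mul_iff_of_pos_right hbjn).mp (by linarith [key] : (b (j+1) ^ n) ^ (m+1) * b j ^ n ≤ (b 0 ^ m * b n ^ (j+1)) ^ (m+1) * b j ^ n)
          exact this
        exact le_of_pow_le_pow_left₀ (by omega) (mul_nonneg (pow_nonneg (hb 0) _) (pow_nonneg (hb n) _)) hcancel


lemma opt_sq {x a c : ℝ} (hx : 0 ≤ x) (ha : 0 ≤ a) (hc : 0 ≤ c)
    (h : ∀ t : ℝ, 0 < t → x ≤ 2 * a / t + c * t) : x ^ 2 ≤ 8 * a * c := by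
  have hrhs : 0 ≤ 8 * a * c := by nlinarith [mul_nonneg ha hc]
  rcases eq_or_lt_of_le ha with hz | hapos
  · have hx0 : x = 0 := by
      have hle : x ≤ 0 := by
        by_contra hpos
        push_neg at hpos
        rcases eq_or_lt_of_le hc with hcz | hcpos
        · have := h 1 one_pos
          rw [← hz, ← hcz] at this
          norm_num at this
          linarith
        · have ht : 0 < x / (2 * c) := by positivity
          have h1 := h (x / (2*c)) ht
          rw [← hz] at h1
          have h2 : c * (x / (2 * c)) = x / 2 := by
            field_simp
          norm_num at h1
          rw [h2] at h1
          linarith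
      linarith
    simpa [hx0] using hrhs
  · rcases eq_or_lt_of_le hc with hz | hcpos
    · have hx0 : x = 0 := by
        have hle : x ≤ 0 := by
          by_contra hpos
          push_neg at hpos
          have ht : 0 < (4 * a) / x := by positivity
          have h1 := h _ ht
          rw [← hz] at h1
          have h2 : 2 * a / (4 * a / x) = x / 2 := by
            rw [div_div_eq_mul_div]
            field_simp
            ring
          rw [h2] at h1
          norm_num at h1
          linarith
        linarith
      simpa [hx0] using hrhs
    · set t := Real.sqrt (2 * a / c) with htdef
      have htpos : 0 < t := Real.sqrt_pos.mpr (by positivity)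
      have hts : t ^ 2 = 2 * a / c := Real.sq_sqrt (by positivity)
      have hct : c * t ^ 2 = 2 * a := by rw [hts]; field_simp
      have hb := h t htpos
      have h1 : 2 * a / t + c * t = 2 * (c * t) := by
        have he : 2 * a / t = c * t := by
          rw [div_eq_iff htpos.ne']
          nlinarith [hct]
        rw [he]; ring
      have h2 : (c * t) ^ 2 = 2 * a * c := by
        have he : (c * t)^2 = c * (c * t^2) := by ring
        rw [he, hct]; ring
      nlinarith [hb, h1, h2, mul_pos hcpos htpos]


lemma landau_pt {E F : Type*} [NormedAddCommGroup E] [NormedSpace ℝ E]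
    [NormedAddCommGroup F] [NormedSpace ℝ F]
    {f : E → F} (hf : ContDiff ℝ (⊤ : ℕ∞) f) (j : ℕ) {a c : ℝ}
    (ha : ∀ y, ‖iteratedFDeriv ℝ j f y‖ ≤ a)
    (hc : ∀ y, ‖iteratedFDeriv ℝ (j+2) f y‖ ≤ c)
    (x : E) {t : ℝ} (ht : 0 < t) :
    ‖iteratedFDeriv ℝ (j+1) f x‖ ≤ 2 * a / t + c * t := by
  have ha0 : 0 ≤ a := le_trans (norm_nonneg _) (ha x)
  have hc0 : 0 ≤ c := le_trans (norm_nonneg _) (hc x)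
  set G := iteratedFDeriv ℝ j f with hG
  have hGs : ContDiff ℝ (⊤ : ℕ∞) G := hf.iteratedFDeriv_right (by exact_mod_cast le_top)
  have hGd : Differentiable ℝ G := hGs.differentiable (by simp)
  have hG's : ContDiff ℝ (⊤ : ℕ∞) (fderiv ℝ G) := hGs.fderiv_right (by exact_mod_cast le_top)
  have hG'd : Differentiable ℝ (fderiv ℝ G) := hG's.differentiable (by simp)
  -- norm identities
  have nlev : ∀ (m : ℕ) (y : E), ‖fderiv ℝ (iteratedFDeriv ℝ m f) y‖
      = ‖iteratedFDeriv ℝ (m+1) f y‖ := by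
    intro m y
    rw [fderiv_iteratedFDeriv]
    exact LinearIsometryEquiv.norm_map _ _
  rw [hG] at *
  rw [← nlev j x]
  have hB : 0 ≤ 2 * a / t + c * t := by positivity
  apply ContinuousLinearMap.opNorm_le_bound _ hB
  intro v
  rcases eq_or_ne v 0 with rfl | hv
  · simp
  · set u := (‖v‖⁻¹ : ℝ) • v with hu
    have hun : ‖u‖ = 1 := norm_smul_inv_norm hv
    set y := x + t • u with hy
    have hyx : y - x = t • u := by rw [hy]; abel
    have hdyx : ‖y - x‖ = t := by rw [hyx, norm_smul, hun]; simp [abs_of_pos ht]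
    -- step A
    have hA : ∀ z, ‖fderiv ℝ G z - fderiv ℝ G x‖ ≤ c * ‖z - x‖ := by
      intro z
      have e1 : fderiv ℝ G = (continuousMultilinearCurryLeftEquiv ℝ
          (fun _ : Fin (j + 1) => E) F) ∘ iteratedFDeriv ℝ (j+1) f := fderiv_iteratedFDeriv
      rw [e1, Function.comp_apply, Function.comp_apply, ← LinearIsometryEquiv.map_sub,
        LinearIsometryEquiv.norm_map]
      exact (convex_univ : Convex ℝ (univ : Set E)).norm_image_sub_le_of_norm_fderiv_le
        (fun w _ => (hf.differentiable_iteratedFDeriv (m := j+1) (by exact_mod_cast ENat.coe_lt_top (j+1))) w)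
        (fun w _ => (nlev (j+1) w).le.trans (hc w)) (mem_univ x) (mem_univ z)
    -- step B
    set L := fderiv ℝ G x with hL
    set ψ : E → (ContinuousMultilinearMap ℝ (fun _ : Fin j => E) F) := fun z => G z - L z with hpsi
    have hψd : ∀ z, HasFDerivAt ψ (fderiv ℝ G z - L) z := by
      intro z
      exact ((hGd z).hasFDerivAt).sub (L.hasFDerivAt)
    have hball : Convex ℝ (Metric.closedBall x t) := convex_closedBall x t
    have hmemx : x ∈ Metric.closedBall x t := Metric.mem_closedBall_self ht.le
    have hmemy : y ∈ Metric.closedBall x t := by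
      rw [Metric.mem_closedBall, dist_eq_norm, hdyx]
    have hB2 : ‖ψ y - ψ x‖ ≤ (c * t) * ‖y - x‖ := by
      apply hball.norm_image_sub_le_of_norm_hasFDerivWithin_le
        (fun z hz => (hψd z).hasFDerivWithinAt) _ hmemx hmemy
      intro z hz
      calc ‖fderiv ℝ G z - L‖ ≤ c * ‖z - x‖ := hA z
        _ ≤ c * t := by
            apply mul_le_mul_of_nonneg_left _ hc0
            rw [← dist_eq_norm]
            exact Metric.mem_closedBall.mp hz
    have hψyx : ψ y - ψ x = G y - G x - L (y - x) := by
      simp only [hpsi, map_sub]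
      abel
    have hcore : ‖L (y - x)‖ ≤ 2 * a + c * t ^ 2 := by
      have h1 : ‖G y - G x - L (y - x)‖ ≤ c * t * t := by
        rw [← hψyx]
        calc ‖ψ y - ψ x‖ ≤ (c * t) * ‖y - x‖ := hB2
          _ = c * t * t := by rw [hdyx]
      calc ‖L (y - x)‖ ≤ ‖G y - G x‖ + ‖G y - G x - L (y - x)‖ := by
            have := norm_sub_le (G y - G x) (G y - G x - L (y - x))
            simpa using this
        _ ≤ (‖G y‖ + ‖G x‖) + c * t * t := by
            gcongr
            exact norm_sub_le _ _
        _ ≤ (a + a) + c * t * t := by gcongr <;> [exact ha y; exact ha x]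
        _ = 2 * a + c * t ^ 2 := by ring
    have hLu : ‖L u‖ ≤ 2 * a / t + c * t := by
      have h2 : ‖L (y - x)‖ = t * ‖L u‖ := by
        rw [hyx]
        rw [L.map_smul]
        rw [norm_smul]
        simp [abs_of_pos ht]
      rw [h2] at hcore
      have h3 : ‖L u‖ ≤ (2 * a + c * t ^ 2) / t := by
        rw [le_div_iff₀ ht, mul_comm]
        exact hcore
      have h4 : (2 * a + c * t ^ 2) / t = 2 * a / t + c * t := by
        field_simp
      rw [h4] at h3
      exact h3

    have hvu : L v = ‖v‖ • L u := by
      rw [hu, map_smul]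
      rw [smul_smul]
      rw [mul_inv_cancel₀ (norm_ne_zero_iff.mpr hv)]
      simp
    have hns := norm_smul (‖v‖) (L u)
    rw [hvu, hns, norm_norm, mul_comm]
    exact mul_le_mul_of_nonneg_right hLu (norm_nonneg v)


lemma inverse_deriv_bound (F : Type*) [NormedAddCommGroup F] [NormedSpace ℝ F]
    [FiniteDimensional ℝ F] (M' M : ℝ) (k : ℕ) :
    ∃ C : ℝ, 0 ≤ C ∧ ∀ a : F →L[ℝ] F, IsUnit a → ‖a‖ ≤ M' → ‖Ring.inverse a‖ ≤ M →
      ∀ i, i ≤ k →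
        ‖iteratedFDeriv ℝ i (Ring.inverse : (F →L[ℝ] F) → (F →L[ℝ] F)) a‖ ≤ C := by
  set R := F →L[ℝ] F
  set U : Set R := {a | IsUnit a} with hUdef
  have hU : IsOpen U := Units.isOpen
  set S : Set R := {a | ‖a‖ ≤ M' ∧ ∃ b : R, ‖b‖ ≤ M ∧ a * b = 1 ∧ b * a = 1} with hSdef
  have hSU : S ⊆ U := by
    rintro a ⟨-, b, -, hab, hba⟩
    exact ⟨⟨a, b, hab, hba⟩, rfl⟩
  have hSc : IsClosed S := by
    apply IsSeqClosed.isClosed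
    intro p A hmem htend
    choose hnorm b hb hab hba using hmem
    have hcball : IsCompact (closedBall (0 : R) M) := isCompact_closedBall 0 M
    obtain ⟨l, hl, φ, hφ, hbl⟩ := hcball.tendsto_subseq
      (fun n => mem_closedBall_zero_iff.mpr (hb n))
    refine ⟨le_of_tendsto (htend.norm) (Eventually.of_forall fun n => hnorm n), l,
      mem_closedBall_zero_iff.mp hl, ?_, ?_⟩
    · have t1 : Tendsto (fun n => p (φ n) * b (φ n)) atTop (𝓝 (A * l)) :=
        ((htend.comp hφ.tendsto_atTop).mul hbl)
      have t2 : Tendsto (fun n => p (φ n) * b (φ n)) atTop (𝓝 1) := by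
        simp only [hab]
        exact tendsto_const_nhds
      exact (tendsto_nhds_unique t1 t2)
    · have t1 : Tendsto (fun n => b (φ n) * p (φ n)) atTop (𝓝 (l * A)) :=
        (hbl.mul (htend.comp hφ.tendsto_atTop))
      have t2 : Tendsto (fun n => b (φ n) * p (φ n)) atTop (𝓝 1) := by
        simp only [hba]
        exact tendsto_const_nhds
      exact (tendsto_nhds_unique t1 t2)
  have hSb : Bornology.IsBounded S := by
    apply (isBounded_closedBall (x := (0:R)) (r := M')).subset
    intro a ha
    exact mem_closedBall_zero_iff.mpr ha.1
  have hScomp : IsCompact S := Metric.isCompact_of_isClosed_isBounded hSc hSb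
  have hinv : ContDiffOn ℝ (⊤ : ℕ∞) (Ring.inverse : R → R) U := by
    intro a ha
    have h1 := contDiffAt_ringInverse ℝ (R := R) (n := (⊤ : ℕ∞)) ha.unit
    rw [ha.unit_spec] at h1
    exact h1.contDiffWithinAt
  have hcont : ∀ i : ℕ, ContinuousOn (iteratedFDeriv ℝ i (Ring.inverse : R → R)) U := by
    intro i
    have h1 : ContinuousOn (iteratedFDerivWithin ℝ i (Ring.inverse : R → R) U) U :=
      hinv.continuousOn_iteratedFDerivWithin (by exact_mod_cast le_top) hU.uniqueDiffOn
    exact h1.congr ((iteratedFDerivWithin_of_isOpen i hU).symm)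
  have hex : ∀ i : ℕ, ∃ C : ℝ, ∀ a ∈ S, ‖iteratedFDeriv ℝ i (Ring.inverse : R → R) a‖ ≤ C :=
    fun i => hScomp.exists_bound_of_continuousOn ((hcont i).mono hSU)
  choose Cf hCf using hex
  refine ⟨∑ i ∈ Finset.range (k+1), |Cf i|, Finset.sum_nonneg (fun i _ => abs_nonneg _), ?_⟩
  intro a ha hnorm hinvnorm i hik
  have haS : a ∈ S := ⟨hnorm, Ring.inverse a,
    hinvnorm, Ring.mul_inverse_cancel a ha, Ring.inverse_mul_cancel a ha⟩
  calc ‖iteratedFDeriv ℝ i (Ring.inverse : R → R) a‖ ≤ Cf i := hCf i a haS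
    _ ≤ |Cf i| := le_abs_self _
    _ ≤ ∑ i ∈ Finset.range (k+1), |Cf i| :=
        Finset.single_le_sum (fun j _ => abs_nonneg (Cf j)) (Finset.mem_range.mpr (by omega))

/-- Tame estimate for inversion: if `κ` takes invertible values, with `sup ‖κ⁻¹‖ ≤ M` and
`|κ|₁ ≤ M`, then `|κ⁻¹|_k ≤ C (1 + |κ|_k)` for a constant `C = C(k, d, F, M)`. -/
theorem cnorm_inverse_tame (k d : ℕ) (hd : 1 ≤ d)
    (F : Type*) [NormedAddCommGroup F] [NormedSpace ℝ F] [FiniteDimensional ℝ F]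
    (M : ℝ) (hM : 0 < M) :
    ∃ C : ℝ, ∀ κ : (Fin d → ℝ) → (F →L[ℝ] F),
      ContDiff ℝ (⊤ : ℕ∞) κ → BoundedDerivs κ →
      (∀ x, IsUnit (κ x)) →
      (∀ x, ‖Ring.inverse (κ x)‖ ≤ M) →
      cnorm 1 κ ≤ M →
      cnorm k (fun x => Ring.inverse (κ x)) ≤ C * (1 + cnorm k κ) := by
  classical
  set M'' : ℝ := max M 1 with hM''def
  have hM''1 : (1:ℝ) ≤ M'' := le_max_right _ _
  have hM''M : M ≤ M'' := le_max_left _ _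
  have hM''0 : (0:ℝ) ≤ M'' := by linarith
  obtain ⟨Cg, hCg0, hCg⟩ := inverse_deriv_bound F M'' M k
  set E8 : ℝ := 8 ^ ((k-1)*(k-2)*(k-1)) with hE8def
  have hE81 : (1:ℝ) ≤ E8 := one_le_pow₀ (by norm_num)
  have hE80 : (0:ℝ) ≤ E8 := by linarith
  set C₀ : ℝ := (E8 + 1) * (M'' + 1) with hC₀def
  have hC₀1 : (1:ℝ) ≤ C₀ := by nlinarith
  have hC₀0 : (0:ℝ) ≤ C₀ := by linarith
  have hE8C₀ : E8 ≤ C₀ := by nlinarith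
  have hM''C₀ : M'' ≤ C₀ := by nlinarith
  refine ⟨(k.factorial : ℝ) * Cg * C₀ ^ k * (M'' + 1), ?_⟩
  intro κ hκ hbd hunit hinvM h1M
  set K := cnorm k κ with hKdef
  -- sup norms of individual orders
  have bddA : ∀ j : ℕ, BddAbove (range fun x => ‖iteratedFDeriv ℝ j κ x‖) := by
    intro j
    obtain ⟨c, hc⟩ := hbd j
    exact ⟨c, by rintro _ ⟨x, rfl⟩; exact hc x⟩
  set A : ℕ → ℝ := fun j => ⨆ x, ‖iteratedFDeriv ℝ j κ x‖ with hAdef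
  have hApt : ∀ (j : ℕ) x, ‖iteratedFDeriv ℝ j κ x‖ ≤ A j := fun j x => le_ciSup (bddA j) x
  have hA0 : ∀ j, 0 ≤ A j := fun j => Real.iSup_nonneg (fun x => norm_nonneg _)
  have hAle : ∀ (j : ℕ) (c : ℝ), (∀ x, ‖iteratedFDeriv ℝ j κ x‖ ≤ c) → A j ≤ c :=
    fun j c hc => ciSup_le hc
  -- pointwise bounds from cnorm hypotheses
  have hbdd1 : BddAbove (range fun p : (Fin d → ℝ) × Fin 2 =>
      ‖iteratedFDeriv ℝ (p.2 : ℕ) κ p.1‖) := by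
    refine ⟨A 0 + A 1, ?_⟩
    rintro _ ⟨⟨x, i⟩, rfl⟩
    simp only
    have : (i : ℕ) = 0 ∨ (i : ℕ) = 1 := by omega
    rcases this with h | h <;> rw [h]
    · linarith [hApt 0 x, hA0 1]
    · linarith [hApt 1 x, hA0 0]
  have hκx : ∀ x, ‖κ x‖ ≤ M := by
    intro x
    have h0 : ‖iteratedFDeriv ℝ ((0 : Fin 2) : ℕ) κ x‖ ≤ cnorm 1 κ :=
      le_ciSup hbdd1 (⟨x, 0⟩ : (Fin d → ℝ) × Fin 2)
    rw [show ((0 : Fin 2) : ℕ) = 0 from rfl, norm_iteratedFDeriv_zero] at h0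
    linarith
  have hA1M : A 1 ≤ M := by
    apply hAle
    intro x
    have h0 : ‖iteratedFDeriv ℝ ((1 : Fin 2) : ℕ) κ x‖ ≤ cnorm 1 κ :=
      le_ciSup hbdd1 (⟨x, 1⟩ : (Fin d → ℝ) × Fin 2)
    rw [show ((1 : Fin 2) : ℕ) = 1 from rfl] at h0
    linarith
  have hbddk : BddAbove (range fun p : (Fin d → ℝ) × Fin (k+1) =>
      ‖iteratedFDeriv ℝ (p.2 : ℕ) κ p.1‖) := by
    refine ⟨∑ i ∈ Finset.range (k+1), A i, ?_⟩
    rintro _ ⟨⟨x, i⟩, rfl⟩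
    calc ‖iteratedFDeriv ℝ (i : ℕ) κ x‖ ≤ A i := hApt _ x
      _ ≤ ∑ m ∈ Finset.range (k+1), A m :=
          Finset.single_le_sum (fun m _ => hA0 m) (Finset.mem_range.mpr i.isLt)
  have hK0 : 0 ≤ K := Real.iSup_nonneg (fun p => norm_nonneg _)
  have hAiK : ∀ i : ℕ, i ≤ k → A i ≤ K := by
    intro i hik
    apply hAle
    intro x
    exact le_ciSup hbddk (⟨x, ⟨i, by omega⟩⟩ : (Fin d → ℝ) × Fin (k+1))
  set K' : ℝ := max K M'' with hK'def
  have hK'1 : (1:ℝ) ≤ K' := le_trans hM''1 (le_max_right _ _)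
  have hK'0 : (0:ℝ) ≤ K' := by linarith
  have hAkK' : A k ≤ K' := le_trans (hAiK k le_rfl) (le_max_left _ _)
  -- Landau chain
  have hchain : ∀ j : ℕ, A (j+1) ^ 2 ≤ 8 * A j * A (j+2) := by
    intro j
    have h8 : A (j+1) ^ 2 ≤ 8 * (A j) * (A (j+2)) := by
      apply opt_sq (hA0 _) (hA0 _) (hA0 _)
      intro t ht
      apply ciSup_le
      intro x
      exact landau_pt hκ j (hApt j) (hApt (j+2)) x ht
    exact h8
  -- interpolation
  have hinterp : ∀ i : ℕ, 1 ≤ i → i ≤ k →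
      A i ^ (k-1) ≤ E8 * (M'' ^ (k - i) * K' ^ (i-1)) := by
    intro i hi1 hik
    set b : ℕ → ℝ := fun t => 8 ^ (t*(t-1)) * A (t+1) with hbdef
    have hbnn : ∀ t, 0 ≤ b t := fun t => mul_nonneg (by positivity) (hA0 _)
    have hconv : ∀ t, 0 < t → t < k - 1 → b t ^ 2 ≤ b (t-1) * b (t+1) := by
      intro t ht _
      obtain ⟨s, rfl⟩ : ∃ s, t = s + 1 := ⟨t - 1, by omega⟩
      have hexp : 2 * ((s+1)*s) + 1 ≤ s*(s-1) + (s+2)*(s+1) := by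
        rcases s with _ | s
        · norm_num
        · simp only [Nat.add_sub_cancel]
          nlinarith
      calc b (s+1) ^ 2 = (8:ℝ) ^ (2 * ((s+1)*s)) * A (s+2) ^ 2 := by
            simp only [hbdef, Nat.add_sub_cancel]
            rw [mul_pow, ← pow_mul]
            ring_nf
        _ ≤ (8:ℝ) ^ (2 * ((s+1)*s)) * (8 * A (s+1) * A (s+3)) := by
            apply mul_le_mul_of_nonneg_left _ (by positivity)
            exact hchain (s+1)
        _ = (8:ℝ) ^ (2 * ((s+1)*s) + 1) * (A (s+1) * A (s+3)) := by
            rw [pow_succ]; ring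
        _ ≤ (8:ℝ) ^ (s*(s-1) + (s+2)*(s+1)) * (A (s+1) * A (s+3)) := by
            apply mul_le_mul_of_nonneg_right _ (mul_nonneg (hA0 _) (hA0 _))
            exact pow_le_pow_right₀ (by norm_num) hexp
        _ = b (s+1-1) * b (s+1+1) := by
            simp only [hbdef, Nat.add_sub_cancel]
            rw [pow_add]
            ring_nf
    have hmain := chain_interp hbnn hconv (i-1) (by omega)
    have hb0 : b 0 = A 1 := by simp [hbdef]
    have hbk : b (k-1) = 8 ^ ((k-1)*(k-2)) * A k := by
      simp only [hbdef]
      rw [show k-1-1 = k-2 by omega, show k-1+1 = k by omega]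
    have hbi : A i ≤ b (i-1) := by
      simp only [hbdef]
      have h1 : (i-1) + 1 = i := by omega
      rw [h1]
      nlinarith [hA0 i, one_le_pow₀ (by norm_num : (1:ℝ) ≤ 8) (n := (i-1)*(i-1-1))]
    calc A i ^ (k-1) ≤ b (i-1) ^ (k-1) := pow_le_pow_left₀ (hA0 i) hbi _
      _ ≤ b 0 ^ (k-1-(i-1)) * b (k-1) ^ (i-1) := hmain
      _ = A 1 ^ (k-i) * ((8:ℝ) ^ ((k-1)*(k-2)) * A k) ^ (i-1) := by
          rw [hb0, hbk, show k-1-(i-1) = k-i by omega]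
      _ ≤ M'' ^ (k-i) * (E8 * K' ^ (i-1)) := by
          apply mul_le_mul
          · exact pow_le_pow_left₀ (hA0 1) (le_trans hA1M hM''M) _
          -- second factor
          · rw [mul_pow]
            apply mul_le_mul
            · rw [← pow_mul, hE8def]
              apply pow_le_pow_right₀ (by norm_num)
              exact Nat.mul_le_mul_left _ (by omega)
            · exact pow_le_pow_left₀ (hA0 k) hAkK' _
            · exact pow_nonneg (hA0 k) _
            · exact hE80
          · exact pow_nonneg (mul_nonneg (by norm_num) (hA0 k)) _
          · exact pow_nonneg hM''0 _
      _ = E8 * (M'' ^ (k-i) * K' ^ (i-1)) := by ring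
  -- the geometric bound D
  set D : ℝ := C₀ * K' ^ ((k:ℝ)⁻¹) with hDdef
  have hrp1 : (1:ℝ) ≤ K' ^ ((k:ℝ)⁻¹) := Real.one_le_rpow hK'1 (by positivity)
  have hC₀D : C₀ ≤ D := le_mul_of_one_le_right hC₀0 hrp1
  have hD1 : (1:ℝ) ≤ D := le_trans hC₀1 hC₀D
  have hD0 : (0:ℝ) ≤ D := by linarith
  have hDpow : k ≠ 0 → ∀ m : ℕ, (K' ^ ((k:ℝ)⁻¹)) ^ (m * k) = K' ^ m := by
    intro hk m
    rw [← Real.rpow_natCast (K' ^ ((k:ℝ)⁻¹)) (m*k), ← Real.rpow_mul hK'0]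
    rw [show (k:ℝ)⁻¹ * ((m*k : ℕ) : ℝ) = (m:ℝ) by
      have : (k:ℝ) ≠ 0 := Nat.cast_ne_zero.mpr hk
      push_cast
      field_simp]
    rw [Real.rpow_natCast]
  have hAD : ∀ i : ℕ, 1 ≤ i → i ≤ k → A i ≤ D ^ i := by
    intro i hi1 hik
    rcases Nat.eq_or_lt_of_le hi1 with rfl | hi2
    · calc A 1 ≤ M'' := le_trans hA1M hM''M
        _ ≤ C₀ := hM''C₀
        _ ≤ D := hC₀D
        _ = D ^ 1 := (pow_one D).symm
    · have hk2 : 2 ≤ k := le_trans hi2 hik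
      have hkk : (k-1) * k ≠ 0 := by
        intro h
        rcases Nat.mul_eq_zero.mp h with h | h <;> omega
      apply le_of_pow_le_pow_left₀ hkk (pow_nonneg hD0 i)
      have step1 : A i ^ ((k-1) * k) ≤ (E8 * (M'' ^ (k-i) * K' ^ (i-1))) ^ k := by
        rw [pow_mul]
        exact pow_le_pow_left₀ (pow_nonneg (hA0 i) _) (hinterp i hi1 hik) k
      have step2 : (E8 * (M'' ^ (k-i) * K' ^ (i-1))) ^ k
          = (E8 ^ k * M'' ^ ((k-i)*k)) * K' ^ ((i-1)*k) := by
        rw [mul_pow, mul_pow, ← pow_mul, ← pow_mul]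
        ring
      have step3 : K' ^ ((i-1)*k) ≤ K' ^ (i*(k-1)) := by
        apply pow_le_pow_right₀ hK'1
        have h1 : (i-1)*k = i*k - 1*k := Nat.sub_mul i 1 k
        have h2 : i*(k-1) = i*k - i*1 := Nat.mul_sub i k 1
        rw [h1, h2, one_mul, mul_one]
        exact Nat.sub_le_sub_left hik (i*k)
      have step5 : E8 ^ k * M'' ^ ((k-i)*k) ≤ C₀ ^ ((i*(k-1))*k) := by
        have e0 : E8 ^ k * M'' ^ ((k-i)*k) ≤ C₀ ^ k * C₀ ^ ((k-i)*k) := by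
          apply mul_le_mul (pow_le_pow_left₀ hE80 hE8C₀ k)
            (pow_le_pow_left₀ hM''0 hM''C₀ _) (pow_nonneg hM''0 _) (pow_nonneg hC₀0 _)
        have e1 : C₀ ^ k * C₀ ^ ((k-i)*k) = C₀ ^ (k + (k-i)*k) := (pow_add C₀ k _).symm
        have e2 : k + (k-i)*k = (k-i+1)*k := by ring
        have e3 : (k-i+1)*k ≤ (k-1)*k := Nat.mul_le_mul_right k (by omega)
        have e4 : (k-1)*k ≤ i*((k-1)*k) := Nat.le_mul_of_pos_left _ (by omega)
        calc E8 ^ k * M'' ^ ((k-i)*k) ≤ C₀ ^ (k + (k-i)*k) := by rw [← e1]; exact e0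
          _ ≤ C₀ ^ ((i*(k-1))*k) := by
              apply pow_le_pow_right₀ hC₀1
              rw [e2, mul_assoc]
              exact le_trans e3 e4
      have rhs_eq : (D ^ i) ^ ((k-1)*k) = C₀ ^ ((i*(k-1))*k) * K' ^ (i*(k-1)) := by
        rw [← pow_mul, show i*((k-1)*k) = (i*(k-1))*k by ring, hDdef, mul_pow, hDpow (by omega) (i*(k-1))]
      calc A i ^ ((k-1)*k) ≤ (E8 * (M'' ^ (k-i) * K' ^ (i-1))) ^ k := step1
        _ = (E8 ^ k * M'' ^ ((k-i)*k)) * K' ^ ((i-1)*k) := step2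
        _ ≤ C₀ ^ ((i*(k-1))*k) * K' ^ (i*(k-1)) :=
            mul_le_mul step5 step3 (pow_nonneg hK'0 _) (pow_nonneg hC₀0 _)
        _ = (D ^ i) ^ ((k-1)*k) := rhs_eq.symm
  -- Faa di Bruno composition bound
  set U : Set (F →L[ℝ] F) := {a | IsUnit a} with hUdef
  have hU : IsOpen U := Units.isOpen
  have hgcd : ContDiffOn ℝ ((k : ℕ∞) : WithTop ℕ∞)
      (Ring.inverse : (F →L[ℝ] F) → (F →L[ℝ] F)) U := by
    intro a ha
    have h1 := contDiffAt_ringInverse ℝ (R := F →L[ℝ] F)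
      (n := ((k : ℕ∞) : WithTop ℕ∞)) ha.unit
    rw [ha.unit_spec] at h1
    exact h1.contDiffWithinAt
  have hfcd : ContDiffOn ℝ ((k : ℕ∞) : WithTop ℕ∞) κ univ :=
    (hκ.of_le (by exact_mod_cast le_top)).contDiffOn
  have hfinal : ∀ (i : ℕ), i ≤ k → ∀ x,
      ‖iteratedFDeriv ℝ i (fun y => Ring.inverse (κ y)) x‖
        ≤ (k.factorial : ℝ) * Cg * C₀ ^ k * (M'' + 1) * (1 + K) := by
    intro i hik x
    have hC : ∀ m, m ≤ i → ‖iteratedFDerivWithin ℝ m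
        (Ring.inverse : (F →L[ℝ] F) → (F →L[ℝ] F)) U (κ x)‖ ≤ Cg := by
      intro m hmi
      rw [iteratedFDerivWithin_of_isOpen m hU (hunit x)]
      exact hCg (κ x) (hunit x) (le_trans (hκx x) hM''M) (hinvM x) m (by omega)
    have hDD : ∀ m, 1 ≤ m → m ≤ i → ‖iteratedFDerivWithin ℝ m κ univ x‖ ≤ D ^ m := by
      intro m hm1 hmi
      rw [iteratedFDerivWithin_univ]
      exact le_trans (hApt m x) (hAD m hm1 (by omega))
    have hcomp := norm_iteratedFDerivWithin_comp_le (𝕜 := ℝ)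
      hgcd hfcd (by exact_mod_cast hik) hU.uniqueDiffOn uniqueDiffOn_univ
      (fun y _ => hunit y) (mem_univ x) hC hDD
    rw [iteratedFDerivWithin_univ] at hcomp
    have hcomp' : ‖iteratedFDeriv ℝ i (fun y => Ring.inverse (κ y)) x‖
        ≤ (i.factorial : ℝ) * Cg * D ^ i := by
      simpa [Function.comp_def] using hcomp
    have hDk : D ^ i ≤ C₀ ^ k * K' := by
      have h1 : D ^ i ≤ D ^ k := pow_le_pow_right₀ hD1 hik
      rcases Nat.eq_zero_or_pos k with rfl | hk
      · simpa using le_trans h1 (by nlinarith : D ^ 0 ≤ C₀ ^ 0 * K')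
      · have h2 : D ^ k = C₀ ^ k * K' := by
          rw [hDdef, mul_pow]
          congr 1
          have := hDpow (by omega) 1
          rw [one_mul] at this
          rw [this, pow_one]
        rw [h2] at h1
        exact h1
    have hK'le : K' ≤ (M'' + 1) * (1 + K) := by
      rw [hK'def]
      apply max_le <;> nlinarith
    calc ‖iteratedFDeriv ℝ i (fun y => Ring.inverse (κ y)) x‖
        ≤ (i.factorial : ℝ) * Cg * D ^ i := hcomp'
      _ ≤ (k.factorial : ℝ) * Cg * (C₀ ^ k * K') := by
          apply mul_le_mul _ hDk (pow_nonneg hD0 i) (by positivity)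
          apply mul_le_mul_of_nonneg_right _ hCg0
          exact_mod_cast Nat.factorial_le hik
      _ ≤ (k.factorial : ℝ) * Cg * (C₀ ^ k * ((M'' + 1) * (1 + K))) := by
          apply mul_le_mul_of_nonneg_left _ (by positivity)
          exact mul_le_mul_of_nonneg_left hK'le (pow_nonneg hC₀0 k)
      _ = (k.factorial : ℝ) * Cg * C₀ ^ k * (M'' + 1) * (1 + K) := by ring
  apply Real.iSup_le
  · rintro ⟨x, i⟩
    exact hfinal (i : ℕ) (by omega) x
  · have : (0:ℝ) ≤ 1 + K := by linarith
    positivity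
end
end
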